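/- arXiv:math/0505421 — 4 statements merged into one kernel-verified Lean document; each statement's English description precedes it below -/
import Mathlib

section
/- Let k be a field and S = k[x_1,...,x_n] a polynomial ring graded by Z^r with deg(x_i) = a_i ∈ Z^r. If S is positively multigraded (i.e. each a_i is nonzero and the subsemigroup Q of Z^r generated by a_1,...,a_n contains no nonzero invertible elements), then there exists a positive coarsening vector for S, i.e. a vector v ∈ Z^r such that v · a_i > 0 for every i = 1,...,n. -/
open MvPolynomial

noncomputable section

/-- The dot product of two integer vectors of length `r`. -/
def vdot {r : ℕ} (u v : Fin r → ℤ) : ℤ := ∑ i, u i * v i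

/-- `Q`: the subsemigroup of `ℤ^r` generated by the degrees `a 1, …, a n` of the variables. -/
def degSemigroup {n r : ℕ} (a : Fin n → Fin r → ℤ) : AddSubmonoid (Fin r → ℤ) :=
  AddSubmonoid.closure (Set.range a)

/-- The polynomial ring `S = k[x_1, …, x_n]`, `ℤ^r`-graded with `deg xᵢ = a i`, is
*positively multigraded*: every variable has nonzero degree and the semigroup `Q`
generated by the degrees has no nonzero invertible elements. -/
def PositivelyMultigraded {n r : ℕ} (a : Fin n → Fin r → ℤ) : Prop :=
  (∀ i, a i ≠ 0) ∧ ∀ q ∈ degSemigroup a, -q ∈ degSemigroup a → q = 0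

/-- `v ∈ ℤ^r` is a *positive coarsening vector*: `vdeg xᵢ = (deg xᵢ) ⬝ v > 0` for every `i`. -/
def IsPosCoarsening {n r : ℕ} (a : Fin n → Fin r → ℤ) (v : Fin r → ℤ) : Prop :=
  ∀ i, 0 < vdot (a i) v

/-- `c_v = lcm(vdeg x_1, …, vdeg x_n)`. -/
def cVal {n r : ℕ} (a : Fin n → Fin r → ℤ) (v : Fin r → ℤ) : ℤ :=
  Finset.univ.lcm fun i => vdot (a i) v

/-- `s_v = max (n·c_v − ∑ vdeg xᵢ, c_v)`. -/
def sVal {n r : ℕ} (a : Fin n → Fin r → ℤ) (v : Fin r → ℤ) : ℤ :=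
  max ((n : ℤ) * cVal a v - ∑ i, vdot (a i) v) (cVal a v)

/-- A `ℤ^r`-grading on a module `M` over `S = k[x_1,…,x_n]` (with `deg xᵢ = a i`):
a family of `k`-subspaces `piece e` forming an internal direct sum decomposition of `M`
and compatible with the `ℤ^r`-grading of `S` by weighted-homogeneous components. -/
structure GradingData (k : Type) [Field k] {n r : ℕ} (a : Fin n → Fin r → ℤ)
    (M : Type) [AddCommGroup M] [Module k M] [Module (MvPolynomial (Fin n) k) M]
    [IsScalarTower k (MvPolynomial (Fin n) k) M] : Type where
  piece : (Fin r → ℤ) → Submodule k M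
  isInternal : DirectSum.IsInternal piece
  smul_mem : ∀ {d e : Fin r → ℤ} {s : MvPolynomial (Fin n) k} {x : M},
    s ∈ weightedHomogeneousSubmodule k a d → x ∈ piece e → s • x ∈ piece (d + e)

variable {k : Type} [Field k] {n r : ℕ} {a : Fin n → Fin r → ℤ}
  {M : Type} [AddCommGroup M] [Module k M] [Module (MvPolynomial (Fin n) k) M]
  [IsScalarTower k (MvPolynomial (Fin n) k) M]

/-- The degree-`m` graded piece of the coarsened `ℤ`-graded module `M^[v]`,
namely `⊕_{d ⬝ v = m} M_d` (as a `k`-subspace of `M`). -/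
def coarsePiece (G : GradingData k a M) (v : Fin r → ℤ) (m : ℤ) : Submodule k M :=
  ⨆ d ∈ {d : Fin r → ℤ | vdot d v = m}, G.piece d

/-- The sign `(-1)^{#{j' ∈ J : j' < j}}` used in the Čech (stable Koszul) differential. -/
def cechSign {n : ℕ} (j : Fin n) (J : Finset (Fin n)) : ℤ :=
  (-1) ^ (J.filter fun j' => j' < j).card

/-- The differential of the stage-`t` Koszul cochain complex `K^•(x_1^t, …, x_n^t; M)`:
`(d f)(J) = ∑_{j ∈ J} ± x_j^t • f (J \ {j})`. -/
def cechDiff (k : Type) [Field k] {n : ℕ} {M : Type} [AddCommGroup M]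
    [Module (MvPolynomial (Fin n) k) M] (t : ℕ) (f : Finset (Fin n) → M) :
    Finset (Fin n) → M := fun J =>
  ∑ j ∈ J, cechSign j J • ((X j : MvPolynomial (Fin n) k) ^ t • f (J.erase j))

/-- The transition map from the stage-`t` to the stage-`t'` Koszul cochain complex,
multiplying the `J`-component by `∏_{j ∈ J} x_j^{t'-t}`. -/
def cechTrans (k : Type) [Field k] {n : ℕ} {M : Type} [AddCommGroup M]
    [Module (MvPolynomial (Fin n) k) M] (t t' : ℕ) (f : Finset (Fin n) → M) :
    Finset (Fin n) → M := fun J =>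
  (∏ j ∈ J, (X j : MvPolynomial (Fin n) k) ^ (t' - t)) • f J

/-- A `p`-cochain at stage `t` which is homogeneous of coarse degree `q`:
its `J`-component lies in the coarse piece of degree `q + t·∑_{j ∈ J} vdeg xⱼ`. -/
def IsHomCochain (G : GradingData k a M) (v : Fin r → ℤ) (t p : ℕ) (q : ℤ)
    (f : Finset (Fin n) → M) : Prop :=
  ∀ J : Finset (Fin n), J.card = p →
    f J ∈ coarsePiece G v (q + (t : ℤ) * ∑ j ∈ J, vdot (a j) v)

/-- Vanishing of the degree-`q` graded piece of the local cohomology `H^i_𝔪(M^[v])`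
(`𝔪 = ⟨x_1,…,x_n⟩`), expressed via the stable Koszul (Čech) direct system:
every homogeneous degree-`q` cocycle at some finite stage is eventually a coboundary. -/
def LocalCohVanish (G : GradingData k a M) (v : Fin r → ℤ) (i : ℕ) (q : ℤ) : Prop :=
  ∀ (t : ℕ) (f : Finset (Fin n) → M), IsHomCochain G v t i q f →
    (∀ J : Finset (Fin n), J.card = i + 1 → cechDiff k t f J = 0) →
    ∃ t', t ≤ t' ∧ ∃ g : Finset (Fin n) → M, IsHomCochain G v t' (i - 1) q g ∧
      ∀ J : Finset (Fin n), J.card = i → cechTrans k t t' f J = cechDiff k t' g J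

/-- `reg_v(M) = {p ∈ ℤ : H^i_𝔪(M)_q = 0 for all i ≥ 0 and all q ∈ p + ℕ c_v[1-i]}`. -/
def regSet (G : GradingData k a M) (v : Fin r → ℤ) : Set ℤ :=
  {p | ∀ i dd : ℕ, LocalCohVanish G v i (p + cVal a v * (1 - (i : ℤ) + (dd : ℤ)))}

/-- The regularity number `reg-num_v(M) = inf {p ∈ reg_v(M) : q ∈ reg_v(M) for all q ≥ p}`. -/
def regNum (G : GradingData k a M) (v : Fin r → ℤ) : ℤ :=
  sInf {p | p ∈ regSet G v ∧ ∀ q : ℤ, p ≤ q → q ∈ regSet G v}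

def qdot {r : ℕ} (u v : Fin r → ℚ) : ℚ := ∑ i, u i * v i

lemma qdot_comm {r : ℕ} (u v : Fin r → ℚ) : qdot u v = qdot v u := by
  unfold qdot; exact Finset.sum_congr rfl fun i _ => mul_comm _ _

lemma qdot_add_right {r : ℕ} (u v w : Fin r → ℚ) :
    qdot u (v + w) = qdot u v + qdot u w := by
  unfold qdot; rw [← Finset.sum_add_distrib]
  exact Finset.sum_congr rfl fun i _ => by simp [mul_add]

lemma qdot_smul_right {r : ℕ} (c : ℚ) (u v : Fin r → ℚ) :
    qdot u (c • v) = c * qdot u v := by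
  unfold qdot; rw [Finset.mul_sum]
  exact Finset.sum_congr rfl fun i _ => by simp; ring

lemma qdot_smul_left {r : ℕ} (c : ℚ) (u v : Fin r → ℚ) :
    qdot (c • u) v = c * qdot u v := by
  rw [qdot_comm, qdot_smul_right, qdot_comm]

lemma qdot_sub_right {r : ℕ} (u v w : Fin r → ℚ) :
    qdot u (v - w) = qdot u v - qdot u w := by
  unfold qdot; rw [← Finset.sum_sub_distrib]
  exact Finset.sum_congr rfl fun i _ => by simp [mul_sub]

lemma qdot_sub_left {r : ℕ} (u v w : Fin r → ℚ) :
    qdot (u - v) w = qdot u w - qdot v w := by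
  rw [qdot_comm, qdot_sub_right, qdot_comm u w, qdot_comm v w]

lemma qdot_sum_left {r : ℕ} {ι : Type*} (s : Finset ι) (f : ι → Fin r → ℚ) (v : Fin r → ℚ) :
    qdot (∑ i ∈ s, f i) v = ∑ i ∈ s, qdot (f i) v := by
  unfold qdot
  rw [Finset.sum_comm]
  exact Finset.sum_congr rfl fun j _ => by simp [Finset.sum_mul]

lemma qdot_self_pos {r : ℕ} {u : Fin r → ℚ} (hu : u ≠ 0) : 0 < qdot u u := by
  have : ∃ i, u i ≠ 0 := by
    by_contra h; push_neg at h; exact hu (funext h)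
  obtain ⟨i, hi⟩ := this
  exact Finset.sum_pos' (fun j _ => mul_self_nonneg _)
    ⟨i, Finset.mem_univ i, mul_self_pos.2 hi⟩

lemma gordan {r : ℕ} : ∀ {n : ℕ} (a : Fin n → Fin r → ℚ),
    (∃ v : Fin r → ℚ, ∀ i, 0 < qdot (a i) v) ∨
    (∃ c : Fin n → ℚ, (∀ i, 0 ≤ c i) ∧ (∃ i, 0 < c i) ∧ ∑ i, c i • a i = 0) := by
  intro n
  induction n with
  | zero => exact fun a => Or.inl ⟨0, fun i => i.elim0⟩
  | succ n ih =>
    intro a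
    set a0 : Fin n → Fin r → ℚ := fun i => a i.castSucc with ha0
    set b : Fin r → ℚ := a (Fin.last n) with hb
    rcases ih a0 with ⟨v, hv⟩ | ⟨c, hc0, hcpos, hcsum⟩
    · by_cases hbv : 0 < qdot b v
      · refine Or.inl ⟨v, fun i => ?_⟩
        rcases Fin.eq_castSucc_or_eq_last i with ⟨j, rfl⟩ | rfl
        · exact hv j
        · exact hbv
      · push_neg at hbv
        by_cases hb0 : b = 0
        · refine Or.inr ⟨Pi.single (Fin.last n) 1, ?_, ⟨Fin.last n, by simp⟩, ?_⟩
          · intro i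
            rcases eq_or_ne i (Fin.last n) with rfl | h
            · simp
            · simp [Pi.single_apply, h]
          · rw [Fintype.sum_eq_single (Fin.last n) (fun i h => by simp [Pi.single_apply, h])]
            rw [Pi.single_eq_same, one_smul, ← hb, hb0]
        · have hB : 0 < qdot b b := qdot_self_pos hb0
          set B := qdot b b with hBdef
          set a' : Fin n → Fin r → ℚ :=
            fun i => B • a0 i - (qdot (a0 i) b) • b with ha'
          rcases ih a' with ⟨u, hu⟩ | ⟨c, hc0, hcpos, hcsum⟩
          · -- build v' = w + ε b with w = B•u - (qdot b u)•b
            set w : Fin r → ℚ := B • u - (qdot b u) • b with hw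
            have hbw : qdot b w = 0 := by
              rw [hw, qdot_sub_right, qdot_smul_right, qdot_smul_right]
              ring
            have haw : ∀ i : Fin n, qdot (a0 i) w = qdot (a' i) u := by
              intro i
              rw [hw, ha', qdot_sub_right, qdot_smul_right, qdot_smul_right,
                qdot_sub_left, qdot_smul_left, qdot_smul_left]
              rw [qdot_comm b u]
              ring
            have hwpos : ∀ i, 0 < qdot (a0 i) w := fun i => (haw i) ▸ hu i
            -- choose epsilon
            set f : Fin n → ℚ := fun i => qdot (a0 i) w / (2 * (1 + |qdot (a0 i) b|)) with hf
            set E : Finset ℚ := insert 1 (Finset.image f Finset.univ) with hE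
            have hEne : E.Nonempty := ⟨1, Finset.mem_insert_self _ _⟩
            set ε : ℚ := E.min' hEne with hε
            have hεpos : 0 < ε := by
              apply (Finset.lt_min'_iff E hEne).2
              intro y hy
              rcases Finset.mem_insert.1 hy with rfl | hy
              · norm_num
              · obtain ⟨i, _, rfl⟩ := Finset.mem_image.1 hy
                have h1 : 0 < 2 * (1 + |qdot (a0 i) b|) := by positivity
                exact div_pos (hwpos i) h1
            have hεle : ∀ i : Fin n, ε ≤ f i := fun i =>
              Finset.min'_le E _ (Finset.mem_insert_of_mem (Finset.mem_image_of_mem f (Finset.mem_univ i)))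
            refine Or.inl ⟨w + ε • b, fun i => ?_⟩
            rcases Fin.eq_castSucc_or_eq_last i with ⟨j, rfl⟩ | rfl
            · show 0 < qdot (a0 j) (w + ε • b)
              rw [qdot_add_right, qdot_smul_right]
              have key : ε * |qdot (a0 j) b| ≤ qdot (a0 j) w / 2 := by
                have h2 : (0:ℚ) < 2 * (1 + |qdot (a0 j) b|) := by positivity
                calc ε * |qdot (a0 j) b| ≤ f j * |qdot (a0 j) b| := by
                      apply mul_le_mul_of_nonneg_right (hεle j) (abs_nonneg _)
                 _ ≤ qdot (a0 j) w / 2 := by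
                      rw [hf]
                      rw [div_mul_eq_mul_div, div_le_div_iff₀ h2 (by norm_num)]
                      have : |qdot (a0 j) b| * 2 ≤ 2 * (1 + |qdot (a0 j) b|) := by
                        nlinarith [abs_nonneg (qdot (a0 j) b)]
                      nlinarith [le_of_lt (hwpos j), abs_nonneg (qdot (a0 j) b)]
              have h3 : -(qdot (a0 j) w / 2) ≤ ε * qdot (a0 j) b := by
                have := neg_abs_le (qdot (a0 j) b)
                nlinarith [hεpos]
              nlinarith [hwpos j]
            · show 0 < qdot b (w + ε • b)
              rw [qdot_add_right, qdot_smul_right, hbw]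
              have : 0 < ε * B := mul_pos hεpos hB
              linarith
          · -- right branch from a'
            have key : B • (∑ i, c i • a0 i) = (∑ i, c i * qdot (a0 i) b) • b := by
              have expand : ∀ i : Fin n, c i • a' i
                  = B • (c i • a0 i) - (c i * qdot (a0 i) b) • b := fun i => by
                rw [ha']; module
              have h1 : ∑ i, (B • (c i • a0 i) - (c i * qdot (a0 i) b) • b) = 0 := by
                rw [← hcsum]
                exact Finset.sum_congr rfl fun i _ => (expand i).symm
              rw [Finset.sum_sub_distrib, ← Finset.smul_sum, ← Finset.sum_smul] at h1
              rw [sub_eq_zero] at h1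
              exact h1
            set μ : ℚ := ∑ i, c i * qdot (a0 i) b with hμ
            have hsum_eq : ∑ i, c i • a0 i = (μ / B) • b := by
              have hBne : B ≠ 0 := ne_of_gt hB
              have : (B⁻¹ : ℚ) • (B • (∑ i, c i • a0 i)) = B⁻¹ • (μ • b) := by rw [key]
              rw [smul_smul, smul_smul, inv_mul_cancel₀ hBne, one_smul] at this
              rw [this, div_eq_inv_mul, mul_smul]
            -- dot with v
            have hdotv : 0 < ∑ i, c i * qdot (a0 i) v := by
              obtain ⟨i0, hi0⟩ := hcpos
              apply Finset.sum_pos' (fun i _ => mul_nonneg (hc0 i) (le_of_lt (hv i)))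
              exact ⟨i0, Finset.mem_univ _, mul_pos hi0 (hv i0)⟩
            have hdotv' : qdot (∑ i, c i • a0 i) v = ∑ i, c i * qdot (a0 i) v := by
              rw [qdot_sum_left]
              exact Finset.sum_congr rfl fun i _ => qdot_smul_left _ _ _
            have hbvneg : qdot b v < 0 := by
              rcases lt_or_eq_of_le hbv with h | h
              · exact h
              · exfalso
                have : qdot (∑ i, c i • a0 i) v = 0 := by
                  rw [hsum_eq, qdot_smul_left, h, mul_zero]
                rw [hdotv'] at this; linarith
            have hcoef : 0 < -(μ / B) := by
              have h1 : (μ / B) * qdot b v = ∑ i, c i * qdot (a0 i) v := by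
                rw [← hdotv', hsum_eq, qdot_smul_left]
              nlinarith
            refine Or.inr ⟨Fin.snoc c (-(μ / B)), fun i => ?_, ⟨Fin.last n, by simp [hcoef]⟩, ?_⟩
            · rcases Fin.eq_castSucc_or_eq_last i with ⟨j, rfl⟩ | rfl
              · simpa using hc0 j
              · simp [le_of_lt hcoef]
            · rw [Fin.sum_univ_castSucc]
              simp only [Fin.snoc_castSucc, Fin.snoc_last]
              rw [show (fun i : Fin n => c i • a i.castSucc) = fun i => c i • a0 i from rfl]
              rw [hsum_eq, ← hb]
              rw [neg_smul, add_neg_eq_zero]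
    · -- right branch directly
      refine Or.inr ⟨Fin.snoc c 0, fun i => ?_, ?_, ?_⟩
      · rcases Fin.eq_castSucc_or_eq_last i with ⟨j, rfl⟩ | rfl
        · simpa using hc0 j
        · simp
      · obtain ⟨i0, hi0⟩ := hcpos
        exact ⟨i0.castSucc, by simpa using hi0⟩
      · rw [Fin.sum_univ_castSucc]
        simp only [Fin.snoc_castSucc, Fin.snoc_last, zero_smul, add_zero]
        exact hcsum


lemma prod_den_pos {r : ℕ} (v : Fin r → ℚ) : (0:ℤ) < ∏ j, ((v j).den : ℤ) :=
  Finset.prod_pos fun j _ => Int.natCast_pos.2 (v j).den_pos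

lemma num_eq_self_mul_den (q : ℚ) : (q.num : ℚ) = q * (q.den : ℚ) := by
  have h : (q.num : ℚ) / (q.den : ℚ) = q := Rat.num_div_den q
  have hd : ((q.den : ℚ)) ≠ 0 := Nat.cast_ne_zero.2 q.den_nz
  rw [div_eq_iff hd] at h
  exact h

theorem exists_posCoarsening_of_positivelyMultigraded'
    (k : Type) [Field k] {n r : ℕ} (a : Fin n → Fin r → ℤ)
    (hpos : PositivelyMultigraded a) :
    ∃ v : Fin r → ℤ, IsPosCoarsening a v := by
  set aq : Fin n → Fin r → ℚ := fun i j => ((a i j : ℤ) : ℚ) with haq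
  rcases gordan aq with ⟨v, hv⟩ | ⟨c, hc0, ⟨i0, hi0⟩, hcsum⟩
  · -- clear denominators of v
    set u : Fin r → ℤ :=
      fun j => (v j).num * ∏ j' ∈ Finset.univ.erase j, ((v j').den : ℤ) with hu
    have hucast : ∀ j, ((u j : ℤ) : ℚ) = (∏ j', ((v j').den : ℚ)) * v j := by
      intro j
      have hfull : ∏ j', ((v j').den : ℚ)
          = ((v j).den : ℚ) * ∏ j' ∈ Finset.univ.erase j, ((v j').den : ℚ) :=
        (Finset.mul_prod_erase Finset.univ _ (Finset.mem_univ j)).symm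
      rw [hu]
      push_cast
      rw [hfull, num_eq_self_mul_den]
      ring
    refine ⟨u, fun i => ?_⟩
    have key : ((vdot (a i) u : ℤ) : ℚ)
        = (∏ j', ((v j').den : ℚ)) * qdot (aq i) v := by
      unfold vdot qdot
      rw [Finset.mul_sum]
      push_cast
      refine Finset.sum_congr rfl fun j _ => ?_
      have := hucast j
      push_cast at this
      rw [this, haq]
      ring
    have hDpos : (0:ℚ) < ∏ j', ((v j').den : ℚ) := by
      have := prod_den_pos v
      have h2 : ((∏ j, ((v j).den : ℤ) : ℤ) : ℚ) = ∏ j', ((v j').den : ℚ) := by push_cast; rfl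
      rw [← h2]
      exact_mod_cast this
    have : (0:ℚ) < ((vdot (a i) u : ℤ) : ℚ) := by
      rw [key]; exact mul_pos hDpos (hv i)
    exact_mod_cast this
  · -- contradiction with pointedness
    exfalso
    set m : Fin n → ℕ :=
      fun i => (c i).num.toNat * ∏ i' ∈ Finset.univ.erase i, (c i').den with hm
    have hmcast : ∀ i, ((m i : ℕ) : ℚ) = (∏ i', ((c i').den : ℚ)) * c i := by
      intro i
      have hnn : 0 ≤ (c i).num := Rat.num_nonneg.2 (hc0 i)
      have h1 : (((c i).num.toNat : ℕ) : ℚ) = ((c i).num : ℚ) := by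
        rw [← Int.cast_natCast, Int.toNat_of_nonneg hnn]
      have hfull : ∏ i', ((c i').den : ℚ)
          = ((c i).den : ℚ) * ∏ i' ∈ Finset.univ.erase i, ((c i').den : ℚ) :=
        (Finset.mul_prod_erase Finset.univ _ (Finset.mem_univ i)).symm
      rw [hm]
      push_cast [h1]
      rw [hfull, num_eq_self_mul_den]
      ring
    have hmpos : 0 < m i0 := by
      rw [hm]
      apply Nat.mul_pos
      · have h := Rat.num_pos.2 hi0; omega
      · exact Finset.prod_pos fun i _ => (c i).den_pos
    have hmsum : ∑ i, m i • a i = 0 := by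
      funext j
      have hq : ((∑ i, m i • a i) j : ℚ) = 0 := by
        have hj := congrFun hcsum j
        simp only [Finset.sum_apply, Pi.smul_apply, Pi.zero_apply, smul_eq_mul,
          nsmul_eq_mul, Pi.mul_apply, Pi.natCast_apply] at hj ⊢
        push_cast
        have : ∑ i, ((m i : ℚ) * (a i j : ℚ))
            = (∏ i', ((c i').den : ℚ)) * ∑ i, c i * aq i j := by
          rw [Finset.mul_sum]
          exact Finset.sum_congr rfl fun i _ => by rw [hmcast i, haq]; ring
        rw [this, hj, mul_zero]
      have : (((∑ i, m i • a i) j : ℤ) : ℚ) = ((0:ℤ) : ℚ) := by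
        simpa using hq
      exact_mod_cast this
    -- pointedness contradiction
    have hmem : a i0 ∈ degSemigroup a := AddSubmonoid.subset_closure (Set.mem_range_self i0)
    have hsplit : m i0 • a i0 + ∑ i ∈ Finset.univ.erase i0, m i • a i = 0 :=
      (Finset.add_sum_erase _ (fun i => m i • a i) (Finset.mem_univ i0)).trans hmsum
    have hstep : m i0 • a i0 = (m i0 - 1) • a i0 + a i0 := by
      conv_lhs => rw [(Nat.succ_pred_eq_of_pos hmpos).symm]
      rw [succ_nsmul, Nat.pred_eq_sub_one]
    have hneg : -(a i0) = (m i0 - 1) • a i0 + ∑ i ∈ Finset.univ.erase i0, m i • a i := by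
      have h := hsplit
      rw [hstep] at h
      have h2 : a i0 + ((m i0 - 1) • a i0 + ∑ i ∈ Finset.univ.erase i0, m i • a i) = 0 := by
        rw [← h]; abel
      exact neg_eq_of_add_eq_zero_right h2
    have hnegmem : -(a i0) ∈ degSemigroup a := by
      rw [hneg]
      refine AddSubmonoid.add_mem _ (AddSubmonoid.nsmul_mem _ hmem _) ?_
      exact AddSubmonoid.sum_mem _ fun i _ =>
        AddSubmonoid.nsmul_mem _ (AddSubmonoid.subset_closure (Set.mem_range_self i)) _
    exact hpos.1 i0 (hpos.2 (a i0) hmem hnegmem)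

/-- If the `ℤ^r`-graded polynomial ring `S = k[x_1,…,x_n]` with
`deg xᵢ = a i` is positively multigraded, then a positive coarsening vector exists:
some `v ∈ ℤ^r` has `v ⬝ (a i) > 0` for every `i`. -/
theorem exists_posCoarsening_of_positivelyMultigraded
    (k : Type) [Field k] {n r : ℕ} (a : Fin n → Fin r → ℤ)
    (hpos : PositivelyMultigraded a) :
    ∃ v : Fin r → ℤ, IsPosCoarsening a v := by
  exact exists_posCoarsening_of_positivelyMultigraded' k a hpos
end
end

section
/- Let S = k[x_1,...,x_n] be positively multigraded by Z^r and let v be a positive coarsening vector. Then there exists p ∈ reg_v(S) such that q ≥ p implies q ∈ reg_v(S), and the regularity number of S is exactly reg-num_v(S) = (n-1)·c_v + 1 − Σ_{i=1}^n vdeg(x_i). -/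
open MvPolynomial

noncomputable section

variable {k : Type} [Field k] {n r : ℕ} {a : Fin n → Fin r → ℤ}
  {M : Type} [AddCommGroup M] [Module k M] [Module (MvPolynomial (Fin n) k) M]
  [IsScalarTower k (MvPolynomial (Fin n) k) M]

/-- The tautological `ℤ^r`-grading of the polynomial ring `S` itself, by
weighted-homogeneous components. -/
def ringGrading (k : Type) [Field k] {n r : ℕ} (a : Fin n → Fin r → ℤ) :
    GradingData k a (MvPolynomial (Fin n) k) where
  piece e := weightedHomogeneousSubmodule k a e
  isInternal :=
    letI := MvPolynomial.weightedDecomposition k a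
    DirectSum.Decomposition.isInternal (weightedHomogeneousSubmodule k a)
  smul_mem hs hx := by
    letI := MvPolynomial.WeightedHomogeneousSubmodule.gradedMonoid (R := k) (w := a)
    simpa [smul_eq_mul] using SetLike.mul_mem_graded hs hx


/-! ### Auxiliary development -/

section Aux

open Finset

/-! #### Sign lemmas -/

lemma cechSign_mul_self (j : Fin n) (J : Finset (Fin n)) : cechSign j J * cechSign j J = 1 := by
  unfold cechSign; rw [← mul_pow]; norm_num

lemma cechSign_insert_self {m : Fin n} {J : Finset (Fin n)} :
    cechSign m (insert m J) = cechSign m J := by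
  unfold cechSign
  congr 2
  rw [Finset.filter_insert, if_neg (lt_irrefl m)]

lemma cechSign_insert_of_ne {m j : Fin n} {J : Finset (Fin n)} (hm : m ∉ J) :
    cechSign j (insert m J) = (if m < j then -1 else 1) * cechSign j J := by
  unfold cechSign
  rw [Finset.filter_insert]
  by_cases h : m < j
  · rw [if_pos h, if_pos h, Finset.card_insert_of_notMem (fun hc => hm (Finset.mem_of_mem_filter m hc)),
      pow_succ]
    ring
  · rw [if_neg h, if_neg h, one_mul]

lemma cechSign_erase {m j : Fin n} {J : Finset (Fin n)} (hj : j ∈ J) :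
    cechSign m (J.erase j) = (if j < m then -1 else 1) * cechSign m J := by
  unfold cechSign
  have hfe : (J.erase j).filter (fun j' => j' < m) = (J.filter (fun j' => j' < m)).erase j := by
    ext x; simp only [Finset.mem_filter, Finset.mem_erase]; tauto
  rw [hfe]
  by_cases h : j < m
  · have hj' : j ∈ J.filter (fun j' => j' < m) := Finset.mem_filter.2 ⟨hj, h⟩
    rw [if_pos h, Finset.card_erase_of_mem hj']
    have hc : (J.filter (fun j' => j' < m)).card = ((J.filter (fun j' => j' < m)).card - 1) + 1 := by
      have := Finset.card_pos.2 ⟨j, hj'⟩; omega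
    conv_rhs => rw [hc]
    rw [pow_succ]; ring
  · rw [if_neg h, one_mul, Finset.erase_eq_of_notMem]
    intro hc
    exact h (Finset.mem_filter.1 hc).2

lemma cechSign_key {m j : Fin n} {J : Finset (Fin n)} (hj : j ∈ J) (hm : m ∉ J) :
    cechSign j J * cechSign m (insert m (J.erase j))
      = -(cechSign m (insert m J) * cechSign j (insert m J)) := by
  have hne : j ≠ m := fun h => hm (h ▸ hj)
  rw [cechSign_insert_self, cechSign_insert_self, cechSign_erase hj, cechSign_insert_of_ne hm]
  rcases lt_or_gt_of_ne hne with h | h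
  · rw [if_pos h, if_neg (asymm h)]; ring
  · rw [if_neg (asymm h), if_pos h]; ring

/-! #### Coefficient lemmas -/

lemma coeff_X_pow_smul (α : Fin n →₀ ℕ) (j : Fin n) (t : ℕ) (p : MvPolynomial (Fin n) k) :
    coeff α ((X j : MvPolynomial (Fin n) k) ^ t • p) =
      if t ≤ α j then coeff (α - Finsupp.single j t) p else 0 := by
  rw [smul_eq_mul, X_pow_eq_monomial, coeff_monomial_mul']
  simp [Finsupp.single_le_iff]

lemma coeff_zsmul (α : Fin n →₀ ℕ) (c : ℤ) (p : MvPolynomial (Fin n) k) :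
    coeff α (c • p) = (c : k) * coeff α p := by
  rw [coeff_smul, zsmul_eq_mul]

lemma coeff_cechDiff (t : ℕ) (f : Finset (Fin n) → MvPolynomial (Fin n) k)
    (J : Finset (Fin n)) (α : Fin n →₀ ℕ) :
    coeff α (cechDiff k t f J) =
      ∑ j ∈ J, (cechSign j J : k) *
        (if t ≤ α j then coeff (α - Finsupp.single j t) (f (J.erase j)) else 0) := by
  unfold cechDiff
  rw [coeff_sum]
  exact Finset.sum_congr rfl fun j _ => by rw [coeff_zsmul, coeff_X_pow_smul]

lemma sub_single_add_single {t : ℕ} {j : Fin n} {α : Fin n →₀ ℕ} (h : t ≤ α j) :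
    (α - Finsupp.single j t) + Finsupp.single j t = α := by
  ext l
  rcases eq_or_ne l j with rfl | hl
  · simp [Finsupp.single_apply]; omega
  · simp [Finsupp.single_apply, hl.symm, Ne.symm hl]

lemma add_single_sub_single {t : ℕ} {j : Fin n} {α : Fin n →₀ ℕ} :
    ((α + Finsupp.single j t) - Finsupp.single j t) = α := by
  ext l
  rcases eq_or_ne l j with rfl | hl
  · simp
  · simp [Finsupp.single_apply, Ne.symm hl]

end Aux


section Aux2

open Finset

/-- The "Laurent degree" of the `J`-component exponent `δ` at stage `t`. -/
def betaF (t : ℕ) (J : Finset (Fin n)) (δ : Fin n →₀ ℕ) (j : Fin n) : ℤ :=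
  (δ j : ℤ) - (if j ∈ J then (t : ℤ) else 0)

lemma betaF_of_notMem {t : ℕ} {J : Finset (Fin n)} {δ : Fin n →₀ ℕ} {j : Fin n} (h : j ∉ J) :
    betaF t J δ j = (δ j : ℤ) := by simp [betaF, h]

lemma betaF_insert_add_single {t : ℕ} {J : Finset (Fin n)} {δ : Fin n →₀ ℕ} {m : Fin n}
    (hm : m ∉ J) :
    betaF t (insert m J) (δ + Finsupp.single m t) = betaF t J δ := by
  funext l
  rcases eq_or_ne l m with rfl | hl
  · simp [betaF, hm]
  · simp [betaF, Finsupp.single_apply, Ne.symm hl, Finset.mem_insert, hl]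

lemma betaF_erase_sub_single {t : ℕ} {J : Finset (Fin n)} {α : Fin n →₀ ℕ} {j : Fin n}
    (hj : j ∈ J) (h : t ≤ α j) :
    betaF t (J.erase j) (α - Finsupp.single j t) = betaF t J α := by
  funext l
  rcases eq_or_ne l j with rfl | hl
  · simp [betaF, Finsupp.tsub_apply, Finsupp.single_apply, hj, Finset.notMem_erase]
    omega
  · simp [betaF, Finsupp.tsub_apply, Finsupp.single_apply, Ne.symm hl,
      Finset.mem_erase, hl]

/-- The homotopy cochain `g` built from a stage-`t` cochain `f`. -/
def homG (k : Type) [Field k] {n : ℕ} (t : ℕ) (f : Finset (Fin n) → MvPolynomial (Fin n) k)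
    (J : Finset (Fin n)) : MvPolynomial (Fin n) k :=
  ∑ m ∈ Jᶜ, ∑ α ∈ (f (insert m J)).support.filter
      (fun α => t ≤ α m ∧ ∀ l, 0 ≤ betaF t (insert m J) α l → m ≤ l),
    monomial (α - Finsupp.single m t)
      ((cechSign m (insert m J) : k) * coeff α (f (insert m J)))

lemma coeff_homG_inner {t : ℕ} {f : Finset (Fin n) → MvPolynomial (Fin n) k}
    {J : Finset (Fin n)} (δ : Fin n →₀ ℕ) (m : Fin n) (hm : m ∉ J) :
    coeff δ (∑ α ∈ (f (insert m J)).support.filter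
      (fun α => t ≤ α m ∧ ∀ l, 0 ≤ betaF t (insert m J) α l → m ≤ l),
      monomial (α - Finsupp.single m t)
        ((cechSign m (insert m J) : k) * coeff α (f (insert m J)))) =
      if (∀ l, 0 ≤ betaF t J δ l → m ≤ l)
      then (cechSign m (insert m J) : k) * coeff (δ + Finsupp.single m t) (f (insert m J))
      else 0 := by
  rw [coeff_sum]
  set α₀ : Fin n →₀ ℕ := δ + Finsupp.single m t with hα₀
  have hα₀m : t ≤ α₀ m := by simp [hα₀]
  have hβ : betaF t (insert m J) α₀ = betaF t J δ := betaF_insert_add_single hm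
  have hsub : α₀ - Finsupp.single m t = δ := add_single_sub_single
  have huniq : ∀ b : Fin n →₀ ℕ, t ≤ b m → b - Finsupp.single m t = δ → b = α₀ := by
    intro b hb he
    rw [hα₀, ← he, sub_single_add_single hb]
  split_ifs with hcond
  · rw [Finset.sum_eq_single α₀]
    · rw [coeff_monomial, if_pos hsub]
    · intro b hb hne
      rw [Finset.mem_filter] at hb
      rw [coeff_monomial, if_neg]
      intro he
      exact hne (huniq b hb.2.1 he)
    · intro hnot
      have : coeff α₀ (f (insert m J)) = 0 := by
        by_contra hc
        exact hnot (Finset.mem_filter.2 ⟨MvPolynomial.mem_support_iff.2 hc,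
          hα₀m, by rw [hβ]; exact hcond⟩)
      rw [this, mul_zero, map_zero, coeff_zero]
  · apply Finset.sum_eq_zero
    intro b hb
    rw [Finset.mem_filter] at hb
    rw [coeff_monomial, if_neg]
    intro he
    have hbe : b = α₀ := huniq b hb.2.1 he
    subst hbe
    rw [hβ] at hb
    exact hcond hb.2.2

lemma coeff_homG {t : ℕ} {f : Finset (Fin n) → MvPolynomial (Fin n) k}
    {J : Finset (Fin n)} {δ : Fin n →₀ ℕ} {m : Fin n} (hm : m ∉ J)
    (hmin : ∀ l, 0 ≤ betaF t J δ l → m ≤ l) :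
    coeff δ (homG k t f J) =
      (cechSign m (insert m J) : k) * coeff (δ + Finsupp.single m t) (f (insert m J)) := by
  unfold homG
  rw [coeff_sum, Finset.sum_eq_single m]
  · rw [coeff_homG_inner δ m hm, if_pos hmin]
  · intro b hb hne
    have hbJ : b ∉ J := by simpa using hb
    rw [coeff_homG_inner δ b hbJ, if_neg]
    intro hcond
    have h1 : m ≤ b := hmin b (by rw [betaF_of_notMem hbJ]; exact_mod_cast Nat.zero_le _)
    have h2 : b ≤ m := hcond m (by rw [betaF_of_notMem hm]; exact_mod_cast Nat.zero_le _)
    exact hne (le_antisymm h2 h1)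
  · intro hc
    exact absurd (Finset.mem_compl.2 hm) hc

lemma coeff_homG_zero {t : ℕ} {f : Finset (Fin n) → MvPolynomial (Fin n) k}
    {J : Finset (Fin n)} {δ : Fin n →₀ ℕ}
    (h : ∀ m, m ∉ J → ¬ (∀ l, 0 ≤ betaF t J δ l → m ≤ l)) :
    coeff δ (homG k t f J) = 0 := by
  unfold homG
  rw [coeff_sum]
  apply Finset.sum_eq_zero
  intro m hm
  have hmJ : m ∉ J := by simpa using hm
  rw [coeff_homG_inner δ m hmJ, if_neg (h m hmJ)]

end Aux2


section Aux3

open Finset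

/-- The coarse weight of an exponent vector. -/
def wtF (a : Fin n → Fin r → ℤ) (v : Fin r → ℤ) (α : Fin n →₀ ℕ) : ℤ :=
  ∑ j, (α j : ℤ) * vdot (a j) v

lemma vdot_weight (v : Fin r → ℤ) (α : Fin n →₀ ℕ) :
    vdot (Finsupp.weight a α) v = wtF a v α := by
  unfold vdot wtF
  rw [Finsupp.weight_apply, Finsupp.sum]
  have h1 : ∀ i : Fin r, (∑ j ∈ α.support, α j • a j) i = ∑ j ∈ α.support, (α j : ℤ) * a j i := by
    intro i
    rw [Finset.sum_apply]
    exact Finset.sum_congr rfl fun j _ => by simp [nsmul_eq_mul]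
  calc ∑ i, (∑ j ∈ α.support, α j • a j) i * v i
      = ∑ i, ∑ j ∈ α.support, (α j : ℤ) * a j i * v i := by
        refine Finset.sum_congr rfl fun i _ => ?_
        rw [h1 i, Finset.sum_mul]
    _ = ∑ j ∈ α.support, ∑ i, (α j : ℤ) * a j i * v i := Finset.sum_comm
    _ = ∑ j ∈ α.support, (α j : ℤ) * ∑ i, a j i * v i := by
        refine Finset.sum_congr rfl fun j _ => ?_
        rw [Finset.mul_sum]
        exact Finset.sum_congr rfl fun i _ => by ring
    _ = ∑ j, (α j : ℤ) * ∑ i, a j i * v i := by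
        refine Finset.sum_subset (Finset.subset_univ _) ?_
        intro j _ hj
        rw [Finsupp.notMem_support_iff.1 hj]
        simp

lemma monomial_mem_coarsePiece {v : Fin r → ℤ} (α : Fin n →₀ ℕ) (c : k) {mdeg : ℤ}
    (h : wtF a v α = mdeg) :
    (monomial α c : MvPolynomial (Fin n) k) ∈ coarsePiece (ringGrading k a) v mdeg := by
  have h1 : (monomial α c : MvPolynomial (Fin n) k) ∈
      (ringGrading k a).piece (Finsupp.weight a α) :=
    isWeightedHomogeneous_monomial a α c rfl
  have h2 : (ringGrading k a).piece (Finsupp.weight a α) ≤ coarsePiece (ringGrading k a) v mdeg :=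
    le_iSup₂ (f := fun d (_ : d ∈ {d : Fin r → ℤ | vdot d v = mdeg}) => (ringGrading k a).piece d)
      (Finsupp.weight a α) (by rw [Set.mem_setOf_eq, vdot_weight, h])
  exact h2 h1

lemma coarsePiece_support {v : Fin r → ℤ} {mdeg : ℤ} {p : MvPolynomial (Fin n) k}
    (hp : p ∈ coarsePiece (ringGrading k a) v mdeg) :
    ∀ α, coeff α p ≠ 0 → wtF a v α = mdeg := by
  let N : Submodule k (MvPolynomial (Fin n) k) :=
    { carrier := {p | ∀ α, coeff α p ≠ 0 → wtF a v α = mdeg}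
      zero_mem' := by intro α h; simp at h
      add_mem' := by
        intro x y hx hy α h
        rw [coeff_add] at h
        by_cases hx0 : coeff α x = 0
        · exact hy α (by rwa [hx0, zero_add] at h)
        · exact hx α hx0
      smul_mem' := by
        intro c x hx α h
        rw [coeff_smul] at h
        exact hx α (right_ne_zero_of_mul h) }
  have hle : coarsePiece (ringGrading k a) v mdeg ≤ N := by
    refine iSup₂_le fun d hd => ?_
    intro x hx α hα
    have hw : Finsupp.weight a α = d := hx hα
    rw [← vdot_weight v α, hw]
    exact hd
  exact hle hp

lemma wtF_sub_single {v : Fin r → ℤ} {α : Fin n →₀ ℕ} {m : Fin n} {t : ℕ} (h : t ≤ α m) :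
    wtF a v (α - Finsupp.single m t) = wtF a v α - (t : ℤ) * vdot (a m) v := by
  unfold wtF
  have hj : ∀ j, ((α - Finsupp.single m t) j : ℤ) = (α j : ℤ) - (if j = m then (t : ℤ) else 0) := by
    intro j
    rcases eq_or_ne j m with rfl | hne
    · rw [Finsupp.tsub_apply, Finsupp.single_apply, if_pos rfl, if_pos rfl]
      omega
    · rw [Finsupp.tsub_apply, Finsupp.single_apply, if_neg (Ne.symm hne), if_neg hne]
      omega
  calc ∑ j, ((α - Finsupp.single m t) j : ℤ) * vdot (a j) v
      = ∑ j, ((α j : ℤ) * vdot (a j) v - (if j = m then (t : ℤ) else 0) * vdot (a j) v) := by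
        refine Finset.sum_congr rfl fun j _ => ?_
        rw [hj j, sub_mul]
    _ = (∑ j, (α j : ℤ) * vdot (a j) v) - ∑ j, (if j = m then (t : ℤ) * vdot (a j) v else 0) := by
        rw [Finset.sum_sub_distrib]
        congr 1
        exact Finset.sum_congr rfl fun j _ => by split_ifs <;> simp
    _ = (∑ j, (α j : ℤ) * vdot (a j) v) - (t : ℤ) * vdot (a m) v := by
        rw [Finset.sum_ite_eq' Finset.univ m (fun j => (t : ℤ) * vdot (a j) v),
          if_pos (Finset.mem_univ m)]

lemma homG_mem {v : Fin r → ℤ} {t i : ℕ} {q : ℤ} (hi : 1 ≤ i)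
    {f : Finset (Fin n) → MvPolynomial (Fin n) k}
    (hf : IsHomCochain (ringGrading k a) v t i q f) :
    IsHomCochain (ringGrading k a) v t (i - 1) q (homG k t f) := by
  intro J hJ
  unfold homG
  apply Submodule.sum_mem
  intro m hm
  apply Submodule.sum_mem
  intro α hα
  rw [Finset.mem_filter] at hα
  obtain ⟨hsupp, htm, -⟩ := hα
  have hmJ : m ∉ J := by simpa using hm
  have hcard : (insert m J).card = i := by
    rw [Finset.card_insert_of_notMem hmJ, hJ]
    omega
  have hwt := coarsePiece_support (hf _ hcard) α (MvPolynomial.mem_support_iff.1 hsupp)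
  apply monomial_mem_coarsePiece
  rw [wtF_sub_single htm, hwt, Finset.sum_insert hmJ]
  ring

end Aux3


section Aux4

open Finset

lemma exp_comm {t : ℕ} {j m : Fin n} {α : Fin n →₀ ℕ} (hne : j ≠ m) (h : t ≤ α j) :
    (α - Finsupp.single j t) + Finsupp.single m t
      = (α + Finsupp.single m t) - Finsupp.single j t := by
  ext l
  simp only [Finsupp.add_apply, Finsupp.tsub_apply, Finsupp.single_apply]
  split_ifs with h1 h2 h2
  · exact absurd (h1.trans h2.symm) hne
  · subst h1; omega
  · omega
  · omega

/-- The key homotopy identity: a homogeneous cocycle is the coboundary of `homG` at the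
same stage, under the degree condition. -/
lemma main_identity {a : Fin n → Fin r → ℤ} {v : Fin r → ℤ} (hv : IsPosCoarsening a v)
    {t i : ℕ} {q : ℤ} {f : Finset (Fin n) → MvPolynomial (Fin n) k}
    (hf : IsHomCochain (ringGrading k a) v t i q f)
    (hz : ∀ J : Finset (Fin n), J.card = i + 1 → cechDiff k t f J = 0)
    (hq : i ≠ n ∨ -(∑ l, vdot (a l) v) < q) :
    ∀ J : Finset (Fin n), J.card = i → f J = cechDiff k t (homG k t f) J := by
  intro J hJ
  apply MvPolynomial.ext
  intro α
  rw [coeff_cechDiff]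
  by_cases hP : ∃ m, 0 ≤ betaF t J α m
  · -- there is a minimal index with nonnegative Laurent degree
    have hPne : (Finset.univ.filter (fun m => 0 ≤ betaF t J α m)).Nonempty := by
      obtain ⟨m, hm⟩ := hP
      exact ⟨m, Finset.mem_filter.2 ⟨Finset.mem_univ m, hm⟩⟩
    obtain ⟨m, hm0, hmin⟩ : ∃ m, 0 ≤ betaF t J α m ∧ ∀ l, 0 ≤ betaF t J α l → m ≤ l := by
      refine ⟨(Finset.univ.filter (fun m => 0 ≤ betaF t J α m)).min' hPne,
        (Finset.mem_filter.1 (Finset.min'_mem _ hPne)).2, fun l hl => ?_⟩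
      exact Finset.min'_le _ l (Finset.mem_filter.2 ⟨Finset.mem_univ l, hl⟩)
    by_cases hmJ : m ∈ J
    · -- Case A1 : the minimum lies in J
      have htm : t ≤ α m := by
        have hb : betaF t J α m = (α m : ℤ) - t := by simp [betaF, hmJ]
        rw [hb] at hm0; omega
      have hstep : ∀ j ∈ J, j ≠ m →
          (cechSign j J : k) *
            (if t ≤ α j then coeff (α - Finsupp.single j t) (homG k t f (J.erase j)) else 0)
            = 0 := by
        intro j hj hne
        by_cases htj : t ≤ α j
        · rw [if_pos htj, coeff_homG_zero, mul_zero]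
          intro m' hm' hcond
          rw [betaF_erase_sub_single hj htj] at hcond
          have h0' : 0 ≤ betaF t J α m' := by
            by_cases hm'J : m' ∈ J
            · have hm'j : m' = j := by
                by_contra hc
                exact hm' (Finset.mem_erase.2 ⟨hc, hm'J⟩)
              subst hm'j
              have hb : betaF t J α m' = (α m' : ℤ) - t := by simp [betaF, hm'J]
              rw [hb]; omega
            · rw [betaF_of_notMem hm'J]; exact Int.natCast_nonneg _
          have h1 : m ≤ m' := hmin m' h0'
          have h2 : m' ≤ m := hcond m hm0
          have : m' = m := le_antisymm h2 h1
          subst this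
          exact hm' (Finset.mem_erase.2 ⟨Ne.symm hne, hmJ⟩)
        · rw [if_neg htj, mul_zero]
      rw [Finset.sum_eq_single m hstep (fun hc => absurd hmJ hc)]
      rw [if_pos htm]
      have hmE : m ∉ J.erase m := Finset.notMem_erase m J
      have hmc : ∀ l, 0 ≤ betaF t (J.erase m) (α - Finsupp.single m t) l → m ≤ l := by
        rw [betaF_erase_sub_single hmJ htm]; exact hmin
      rw [coeff_homG hmE hmc, Finset.insert_erase hmJ, sub_single_add_single htm]
      rw [← mul_assoc, ← Int.cast_mul, cechSign_mul_self, Int.cast_one, one_mul]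
    · -- Case A2 : the minimum does not lie in J; use the cocycle condition
      have hK : (insert m J).card = i + 1 := by rw [Finset.card_insert_of_notMem hmJ, hJ]
      have h0 : coeff (α + Finsupp.single m t) (cechDiff k t f (insert m J)) = 0 := by
        rw [hz (insert m J) hK, coeff_zero]
      rw [coeff_cechDiff, Finset.sum_insert hmJ] at h0
      have hm_t : t ≤ (α + Finsupp.single m t) m := by simp
      rw [if_pos hm_t, add_single_sub_single, Finset.erase_insert hmJ] at h0
      have hsum : ∑ j ∈ J, (cechSign j (insert m J) : k) *
            (if t ≤ (α + Finsupp.single m t) j then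
              coeff ((α + Finsupp.single m t) - Finsupp.single j t) (f ((insert m J).erase j))
            else 0)
          = ∑ j ∈ J, (cechSign j (insert m J) : k) *
            (if t ≤ α j then
              coeff ((α + Finsupp.single m t) - Finsupp.single j t) (f (insert m (J.erase j)))
            else 0) := by
        refine Finset.sum_congr rfl fun j hj => ?_
        have hne : j ≠ m := fun h => hmJ (h ▸ hj)
        have h1 : (α + Finsupp.single m t) j = α j := by
          simp [Finsupp.single_apply, Ne.symm hne]
        rw [h1, Finset.erase_insert_of_ne (Ne.symm hne)]
      rw [hsum] at h0
      have hterm : ∀ j ∈ J, (cechSign j J : k) *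
            (if t ≤ α j then coeff (α - Finsupp.single j t) (homG k t f (J.erase j)) else 0)
          = -((cechSign m (insert m J) : k) * ((cechSign j (insert m J) : k) *
            (if t ≤ α j then
              coeff ((α + Finsupp.single m t) - Finsupp.single j t) (f (insert m (J.erase j)))
            else 0))) := by
        intro j hj
        have hne : j ≠ m := fun h => hmJ (h ▸ hj)
        by_cases htj : t ≤ α j
        · rw [if_pos htj, if_pos htj]
          have hmE : m ∉ J.erase j := fun h => hmJ (Finset.mem_of_mem_erase h)
          have hmc : ∀ l, 0 ≤ betaF t (J.erase j) (α - Finsupp.single j t) l → m ≤ l := by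
            rw [betaF_erase_sub_single hj htj]; exact hmin
          rw [coeff_homG hmE hmc, exp_comm hne htj]
          have hcast : (cechSign j J : k) * (cechSign m (insert m (J.erase j)) : k)
              = -((cechSign m (insert m J) : k) * (cechSign j (insert m J) : k)) := by
            rw [← Int.cast_mul, cechSign_key hj hmJ]
            push_cast
            ring
          rw [← mul_assoc, hcast]
          ring
        · rw [if_neg htj, if_neg htj, mul_zero, mul_zero, mul_zero, neg_zero]
      rw [Finset.sum_congr rfl hterm, Finset.sum_neg_distrib, ← Finset.mul_sum]
      have hsq : (cechSign m (insert m J) : k) * (cechSign m (insert m J) : k) = 1 := by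
        rw [← Int.cast_mul, cechSign_mul_self, Int.cast_one]
      linear_combination (cechSign m (insert m J) : k) * h0 - coeff α (f J) * hsq
  · -- Case B : all Laurent degrees negative; forces J = univ and uses the degree bound
    push_neg at hP
    have hJu : J = Finset.univ := by
      rw [Finset.eq_univ_iff_forall]
      intro j
      by_contra hjJ
      have hb := hP j
      rw [betaF_of_notMem hjJ] at hb
      omega
    have hin : i = n := by
      rw [hJu, Finset.card_univ, Fintype.card_fin] at hJ
      omega
    have hq' : -(∑ l, vdot (a l) v) < q := by
      rcases hq with h | h
      · exact absurd hin h
      · exact h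
    have hL : coeff α (f J) = 0 := by
      by_contra hc
      have hwt := coarsePiece_support (hf J hJ) α hc
      have hQ : q = ∑ j, betaF t J α j * vdot (a j) v := by
        have hsplit : ∑ j, betaF t J α j * vdot (a j) v
            = wtF a v α - (t : ℤ) * ∑ j ∈ J, vdot (a j) v := by
          rw [hJu]
          unfold betaF wtF
          rw [Finset.mul_sum, ← Finset.sum_sub_distrib]
          refine Finset.sum_congr rfl fun j _ => ?_
          rw [if_pos (Finset.mem_univ j)]
          ring
        rw [hsplit, hwt]
        ring
      have hle : ∑ j, betaF t J α j * vdot (a j) v ≤ ∑ j : Fin n, -vdot (a j) v := by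
        refine Finset.sum_le_sum fun j _ => ?_
        have h1 : betaF t J α j ≤ -1 := by have := hP j; omega
        have h2 : 0 < vdot (a j) v := hv j
        nlinarith
      rw [Finset.sum_neg_distrib] at hle
      linarith
    rw [hL]
    symm
    apply Finset.sum_eq_zero
    intro j hj
    have hjn : ¬ t ≤ α j := by
      have hb := hP j
      have : betaF t J α j = (α j : ℤ) - t := by simp [betaF, hj]
      rw [this] at hb
      omega
    rw [if_neg hjn, mul_zero]

/-- The vanishing lemma: local cohomology pieces vanish except at `i = n` in low degrees. -/
lemma vanish {a : Fin n → Fin r → ℤ} {v : Fin r → ℤ} (hv : IsPosCoarsening a v)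
    (i : ℕ) (q : ℤ) (hq : i ≠ n ∨ -(∑ l, vdot (a l) v) < q) :
    LocalCohVanish (ringGrading k a) v i q := by
  intro t f hf hz
  have hid := main_identity hv hf hz hq
  have htrans : ∀ J : Finset (Fin n), cechTrans k t t f J = f J := by
    intro J
    unfold cechTrans
    rw [Nat.sub_self]
    simp
  refine ⟨t, le_rfl, ?_⟩
  rcases Nat.eq_zero_or_pos i with rfl | hi
  · refine ⟨fun _ => 0, fun J _ => Submodule.zero_mem _, fun J hJ => ?_⟩
    have hJ0 : J = ∅ := Finset.card_eq_zero.mp hJ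
    subst hJ0
    rw [htrans ∅, hid ∅ hJ]
    unfold cechDiff
    simp
  · exact ⟨homG k t f, homG_mem hi hf, fun J hJ => by rw [htrans J, hid J hJ]⟩

end Aux4


section Aux5

open Finset

/-- Nonvanishing of the top local cohomology in degree `-∑ vdeg xᵢ`. -/
lemma nonvanish {a : Fin n → Fin r → ℤ} {v : Fin r → ℤ} :
    ¬ LocalCohVanish (ringGrading k a) v n (-(∑ l, vdot (a l) v)) := by
  intro h
  have hf : IsHomCochain (ringGrading k a) v 1 n (-(∑ l, vdot (a l) v))
      (fun J => if J = Finset.univ then (1 : MvPolynomial (Fin n) k) else 0) := by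
    intro J hJ
    have hJu : J = Finset.univ := Finset.eq_univ_of_card J (by rw [hJ, Fintype.card_fin])
    subst hJu
    simp only [if_pos rfl]
    have h1 : (1 : MvPolynomial (Fin n) k) = monomial 0 1 := by
      rw [monomial_zero']
      simp
    rw [h1]
    apply monomial_mem_coarsePiece
    unfold wtF
    simp
  have hz : ∀ J : Finset (Fin n), J.card = n + 1 →
      cechDiff k 1 (fun J => if J = Finset.univ then (1 : MvPolynomial (Fin n) k) else 0) J
        = 0 := by
    intro J hJ
    exfalso
    have hle := Finset.card_le_univ J
    have hcard : Fintype.card (Fin n) = n := Fintype.card_fin n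
    rw [hJ, hcard] at hle
    omega
  obtain ⟨t', ht', g, hg, hiden⟩ := h 1 _ hf hz
  have hid := hiden Finset.univ (by rw [Finset.card_univ, Fintype.card_fin])
  set αstar : Fin n →₀ ℕ := Finsupp.equivFunOnFinite.symm (fun _ => t' - 1) with hastar
  have hasj : ∀ j, αstar j = t' - 1 := by
    intro j
    rw [hastar]
    rfl
  have hL : coeff αstar (cechTrans (n := n) (M := MvPolynomial (Fin n) k) k 1 t'
      (fun J => if J = Finset.univ then (1 : MvPolynomial (Fin n) k) else 0)
      Finset.univ) = 1 := by
    unfold cechTrans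
    have hfu : (fun J => if J = Finset.univ then (1 : MvPolynomial (Fin n) k) else 0)
        (Finset.univ : Finset (Fin n)) = 1 := if_pos rfl
    rw [hfu, smul_eq_mul, mul_one]
    have hprod : (∏ j : Fin n, (X j : MvPolynomial (Fin n) k) ^ (t' - 1))
        = monomial αstar 1 := by
      have h1 : (∏ j : Fin n, (X j : MvPolynomial (Fin n) k) ^ (t' - 1))
          = ∏ j : Fin n, (X j : MvPolynomial (Fin n) k) ^ (αstar j) :=
        Finset.prod_congr rfl (fun j _ => by rw [hasj j])
      rw [h1, ← MvPolynomial.prod_X_pow_eq_monomial]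
      exact (Finset.prod_subset (Finset.subset_univ _) (fun j _ hj => by
        rw [Finsupp.notMem_support_iff.1 hj, pow_zero])).symm
    rw [hprod, coeff_monomial, if_pos rfl]
  have hR : coeff αstar (cechDiff k t' g Finset.univ) = 0 := by
    rw [coeff_cechDiff]
    apply Finset.sum_eq_zero
    intro j _
    rw [if_neg, mul_zero]
    rw [hasj j]
    omega
  rw [hid] at hL
  rw [hL] at hR
  exact one_ne_zero hR

lemma cVal_pos {a : Fin n → Fin r → ℤ} {v : Fin r → ℤ} (hv : IsPosCoarsening a v) :
    0 < cVal a v := by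
  have hne : cVal a v ≠ 0 := by
    unfold cVal
    rw [Ne, Finset.lcm_eq_zero_iff]
    rintro ⟨i, -, h0⟩
    exact (hv i).ne' h0
  have hnn : 0 ≤ cVal a v := by
    have h1 : normalize (cVal a v) = cVal a v :=
      Finset.normalize_lcm (s := Finset.univ) (f := fun i => vdot (a i) v)
    have h2 : |cVal a v| = cVal a v := by rw [Int.abs_eq_normalize, h1]
    rw [← h2]
    exact abs_nonneg _
  omega

end Aux5

/-- For the positively multigraded polynomial ring `S` and a
positive coarsening vector `v`, the set `reg_v(S)` eventually contains all large
integers, and `reg-num_v(S) = (n-1)·c_v + 1 - ∑ vdeg xᵢ`. -/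
theorem regNum_ring_eq
    (k : Type) [Field k] {n r : ℕ} (a : Fin n → Fin r → ℤ)
    (hpos : PositivelyMultigraded a)
    (v : Fin r → ℤ) (hv : IsPosCoarsening a v) :
    (∃ p ∈ regSet (ringGrading k a) v, ∀ q : ℤ, p ≤ q → q ∈ regSet (ringGrading k a) v) ∧
      regNum (ringGrading k a) v =
        ((n : ℤ) - 1) * cVal a v + 1 - ∑ i, vdot (a i) v := by
  have hc0 : 0 < cVal a v := cVal_pos hv
  have hmem : ∀ p : ℤ, ((n : ℤ) - 1) * cVal a v + 1 - (∑ l, vdot (a l) v) ≤ p →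
      p ∈ regSet (ringGrading k a) v := by
    intro p hp i dd
    by_cases hin : i = n
    · rw [hin]
      apply vanish hv
      right
      have h1 : cVal a v * (1 - (n : ℤ)) ≤ cVal a v * (1 - (n : ℤ) + (dd : ℕ)) := by
        apply mul_le_mul_of_nonneg_left _ (le_of_lt hc0)
        have : (0 : ℤ) ≤ (dd : ℕ) := Int.natCast_nonneg _
        linarith
      nlinarith [h1]
    · exact vanish hv i _ (Or.inl hin)
  have hnot : ((n : ℤ) - 1) * cVal a v + 1 - (∑ l, vdot (a l) v) - 1
      ∉ regSet (ringGrading k a) v := by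
    intro hmem'
    have hvan := hmem' n 0
    have hqe : ((n : ℤ) - 1) * cVal a v + 1 - (∑ l, vdot (a l) v) - 1
        + cVal a v * (1 - (n : ℤ) + ((0 : ℕ) : ℤ)) = -(∑ l, vdot (a l) v) := by
      push_cast
      ring
    rw [hqe] at hvan
    exact nonvanish hvan
  refine ⟨⟨((n : ℤ) - 1) * cVal a v + 1 - (∑ l, vdot (a l) v), hmem _ le_rfl,
    fun q hq => hmem q hq⟩, ?_⟩
  have hTeq : {p : ℤ | p ∈ regSet (ringGrading k a) v ∧
      ∀ q : ℤ, p ≤ q → q ∈ regSet (ringGrading k a) v}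
      = Set.Ici (((n : ℤ) - 1) * cVal a v + 1 - (∑ l, vdot (a l) v)) := by
    ext p
    simp only [Set.mem_setOf_eq, Set.mem_Ici]
    constructor
    · rintro ⟨hp1, hp2⟩
      by_contra hlt
      push_neg at hlt
      exact hnot (hp2 _ (by omega))
    · intro hp
      exact ⟨hmem p hp, fun q hq => hmem q (le_trans hp hq)⟩
  unfold regNum
  rw [hTeq, csInf_Ici]
end
end

section
/- Let S = k[x_1,...,x_n] be positively multigraded by Z^r and let M be a finitely generated Z^r-graded S-module whose Hilbert series is supported on ∪_k (b_k + Q). Define D_i(M) = ∩_v D_{i,v}(M), the intersection over all positive coarsening vectors v of the sets D_{i,v}(M) = { a ∈ ∪_k (b_k + Q) : a · v ≤ reg-num_v(M) + i·s_v + c_v − 1 }. Then there exists a finite set V = {v_1,...,v_m} of positive coarsening vectors such that D_i(M) = ∩_{v_j ∈ V} D_{i,v_j}(M). -/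
open MvPolynomial

noncomputable section

variable {k : Type} [Field k] {n r : ℕ} {a : Fin n → Fin r → ℤ}
  {M : Type} [AddCommGroup M] [Module k M] [Module (MvPolynomial (Fin n) k) M]
  [IsScalarTower k (MvPolynomial (Fin n) k) M]

/-- The set `𝒟_{i,v}(M) = {a ∈ ⋃_j (b_j + Q) : a ⬝ v ≤ reg-num_v(M) + i·s_v + c_v - 1}`
bounding the multidegrees of the minimal `i`-th syzygies of `M`. -/
def Dset {k : Type} [Field k] {n r : ℕ} {a : Fin n → Fin r → ℤ}
    {M : Type} [AddCommGroup M] [Module k M] [Module (MvPolynomial (Fin n) k) M]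
    [IsScalarTower k (MvPolynomial (Fin n) k) M] (G : GradingData k a M)
    (v : Fin r → ℤ) {K : ℕ} (b : Fin K → Fin r → ℤ) (i : ℕ) : Set (Fin r → ℤ) :=
  {e | (∃ j, ∃ q ∈ degSemigroup a, e = b j + q) ∧
    vdot e v ≤ regNum G v + (i : ℤ) * sVal a v + cVal a v - 1}

section Aux

variable {n r : ℕ} {a : Fin n → Fin r → ℤ}

/-- `vdot · v` as an additive monoid hom in the first argument. -/
def vdotHom (v : Fin r → ℤ) : (Fin r → ℤ) →+ ℤ where
  toFun u := vdot u v
  map_zero' := by simp [vdot]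
  map_add' u w := by simp [vdot, add_mul, Finset.sum_add_distrib]

lemma exists_rep {q : Fin r → ℤ} (hq : q ∈ degSemigroup a) :
    ∃ m : Fin n → ℕ, q = ∑ i, (m i : ℤ) • a i := by
  refine AddSubmonoid.closure_induction ?_ ?_ ?_ hq
  · rintro x ⟨i₀, rfl⟩
    refine ⟨Pi.single i₀ 1, ?_⟩
    simp [Pi.single_apply, apply_ite, ite_smul, Finset.sum_ite_eq']
  · exact ⟨0, by simp⟩
  · rintro x y hx hy ⟨m, rfl⟩ ⟨m', rfl⟩
    refine ⟨m + m', ?_⟩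
    simp [add_smul, Finset.sum_add_distrib]

lemma vdot_rep (v : Fin r → ℤ) (m : Fin n → ℕ) :
    vdot (∑ i, (m i : ℤ) • a i) v = ∑ i, (m i : ℤ) * vdot (a i) v := by
  rw [show vdot (∑ i, (m i : ℤ) • a i) v = vdotHom v (∑ i, (m i : ℤ) • a i) from rfl,
    map_sum]
  refine Finset.sum_congr rfl fun i _ => ?_
  rw [map_zsmul]
  rfl

/-- The key finiteness: the part of `⋃ⱼ (bⱼ + Q)` lying in the half-space
`⟨·, v⟩ ≤ C` is finite, for any positive coarsening vector `v`. -/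
lemma halfspace_finite {K : ℕ} (b : Fin K → Fin r → ℤ) {v : Fin r → ℤ}
    (hv : IsPosCoarsening a v) (C : ℤ) :
    {e : Fin r → ℤ | (∃ j, ∃ q ∈ degSemigroup a, e = b j + q) ∧ vdot e v ≤ C}.Finite := by
  have hsub : {e : Fin r → ℤ | (∃ j, ∃ q ∈ degSemigroup a, e = b j + q) ∧ vdot e v ≤ C} ⊆
      ⋃ j : Fin K, (fun m : Fin n → ℕ => b j + ∑ i, (m i : ℤ) • a i) ''
        (Set.pi Set.univ fun _ : Fin n => Set.Iic (C - vdot (b j) v).toNat) := by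
    rintro e ⟨⟨j, q, hq, rfl⟩, hle⟩
    obtain ⟨m, rfl⟩ := exists_rep hq
    refine Set.mem_iUnion.mpr ⟨j, m, ?_, rfl⟩
    intro i₀ _
    have hdq : vdot (b j + ∑ i, (m i : ℤ) • a i) v
        = vdot (b j) v + ∑ i, (m i : ℤ) * vdot (a i) v := by
      rw [show vdot (b j + ∑ i, (m i : ℤ) • a i) v
          = vdotHom v (b j + ∑ i, (m i : ℤ) • a i) from rfl, map_add]
      rw [show (vdotHom v) (∑ i, (m i : ℤ) • a i) = vdot (∑ i, (m i : ℤ) • a i) v from rfl,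
        vdot_rep]
      rfl
    have hqle : ∑ i, (m i : ℤ) * vdot (a i) v ≤ C - vdot (b j) v := by omega
    have hterm : (m i₀ : ℤ) ≤ ∑ i, (m i : ℤ) * vdot (a i) v := by
      have h1 : (m i₀ : ℤ) ≤ (m i₀ : ℤ) * vdot (a i₀) v :=
        le_mul_of_one_le_right (Int.natCast_nonneg _) (by have := hv i₀; omega)
      have h2 : (m i₀ : ℤ) * vdot (a i₀) v ≤ ∑ i, (m i : ℤ) * vdot (a i) v :=
        Finset.single_le_sum
          (fun i _ => mul_nonneg (Int.natCast_nonneg _) (le_of_lt (hv i)))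
          (Finset.mem_univ i₀)
      exact h1.trans h2
    have hC : (m i₀ : ℤ) ≤ C - vdot (b j) v := le_trans hterm hqle
    have h0 : (0 : ℤ) ≤ C - vdot (b j) v := le_trans (Int.natCast_nonneg _) hC
    have hfin : m i₀ ≤ (C - vdot (b j) v).toNat := by omega
    exact Set.mem_Iic.mpr hfin
  refine Set.Finite.subset (Set.finite_iUnion fun j => ?_) hsub
  exact Set.Finite.image _ (Set.Finite.pi fun _ => Set.finite_Iic _)

end Aux

lemma dset_finite {k : Type} [Field k] {n r : ℕ} {a : Fin n → Fin r → ℤ}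
    {M : Type} [AddCommGroup M] [Module k M] [Module (MvPolynomial (Fin n) k) M]
    [IsScalarTower k (MvPolynomial (Fin n) k) M] (G : GradingData k a M)
    {v : Fin r → ℤ} (hv : IsPosCoarsening a v) {K : ℕ} (b : Fin K → Fin r → ℤ) (i : ℕ) :
    (Dset G v b i).Finite :=
  halfspace_finite b hv _

/-- All the information given by the sets `𝒟_{i,v}(M)`, as `v` runs
through all positive coarsening vectors, is already given by finitely many such
vectors: there is a finite set `V` of positive coarsening vectors with
`𝒟_i(M) = ⋂_{v} 𝒟_{i,v}(M) = ⋂_{v ∈ V} 𝒟_{i,v}(M)`. -/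
theorem exists_finite_coarsening_set
    {k : Type} [Field k] {n r : ℕ} {a : Fin n → Fin r → ℤ}
    (hpos : PositivelyMultigraded a)
    {M : Type} [AddCommGroup M] [Module k M] [Module (MvPolynomial (Fin n) k) M]
    [IsScalarTower k (MvPolynomial (Fin n) k) M]
    [Module.Finite (MvPolynomial (Fin n) k) M]
    (G : GradingData k a M)
    {K : ℕ} (b : Fin K → Fin r → ℤ)
    (hsupp : ∀ e : Fin r → ℤ, G.piece e ≠ ⊥ → ∃ j, ∃ q ∈ degSemigroup a, e = b j + q)
    (i : ℕ) :
    ∃ V : Finset (Fin r → ℤ), (∀ v ∈ V, IsPosCoarsening a v) ∧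
      (⋂ v ∈ {v : Fin r → ℤ | IsPosCoarsening a v}, Dset G v b i) =
        ⋂ v ∈ (V : Set (Fin r → ℤ)), Dset G v b i := by
  classical
  by_cases hP : ∃ v0 : Fin r → ℤ, IsPosCoarsening a v0
  · obtain ⟨v0, hv0⟩ := hP
    have hfin : (Dset G v0 b i).Finite := dset_finite G hv0 b i
    set D : Set (Fin r → ℤ) :=
      ⋂ v ∈ {v : Fin r → ℤ | IsPosCoarsening a v}, Dset G v b i with hD
    have hw : ∀ e : Fin r → ℤ,
        ∃ v, IsPosCoarsening a v ∧ (e ∉ D → e ∉ Dset G v b i) := by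
      intro e
      by_cases he : e ∈ D
      · exact ⟨v0, hv0, fun h => absurd he h⟩
      · have he' : ¬ ∀ v : Fin r → ℤ, IsPosCoarsening a v → e ∈ Dset G v b i := by
          intro hall
          exact he (Set.mem_iInter₂.mpr fun v hv => hall v hv)
        push_neg at he'
        obtain ⟨v, hv, hev⟩ := he'
        exact ⟨v, hv, fun _ => hev⟩
    choose w hw1 hw2 using hw
    refine ⟨insert v0 (hfin.toFinset.image w), ?_, ?_⟩
    · intro v hv
      rcases Finset.mem_insert.mp hv with rfl | hv
      · exact hv0
      · obtain ⟨e, _, rfl⟩ := Finset.mem_image.mp hv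
        exact hw1 e
    · apply Set.Subset.antisymm
      · intro e he
        refine Set.mem_iInter₂.mpr fun v hv => ?_
        have hvmem : v ∈ ({v : Fin r → ℤ | IsPosCoarsening a v} : Set _) := by
          rcases Finset.mem_insert.mp hv with rfl | hv'
          · exact hv0
          · obtain ⟨e', _, rfl⟩ := Finset.mem_image.mp hv'
            exact hw1 e'
        exact Set.mem_iInter₂.mp he v hvmem
      · intro e he
        by_contra heD
        have hev0 : e ∈ Dset G v0 b i :=
          Set.mem_iInter₂.mp he v0 (Finset.mem_insert_self _ _)
        have hmem : w e ∈ (insert v0 (hfin.toFinset.image w) : Finset _) :=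
          Finset.mem_insert_of_mem
            (Finset.mem_image_of_mem w (hfin.mem_toFinset.mpr hev0))
        have : e ∈ Dset G (w e) b i := Set.mem_iInter₂.mp he (w e) hmem
        exact hw2 e heD this
  · push_neg at hP
    refine ⟨∅, by simp, ?_⟩
    have h1 : ({v : Fin r → ℤ | IsPosCoarsening a v} : Set _) = ∅ :=
      Set.eq_empty_iff_forall_notMem.mpr fun v hv => hP v hv
    rw [h1]
    simp
end
end

section
/- In the proof of Corollary C:dv the following is used and proved: for a positive coarsening vector v and a positive integer d, if r = reg-num_v(M), then d(r−1) ∉ reg_{dv}(M); that is, the vanishing H^i_m(M^[dv])_q = 0 for all i ≥ 0 and all q ∈ d(r−1) + N·(d c_v)[1−i] would force H^i_m(M^[v])_{q'} = 0 for all i ≥ 0 and all q' ∈ (r−1) + N c_v[1−i], contradicting r − 1 ∉ reg_v(M). -/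
open MvPolynomial

noncomputable section

variable {k : Type} [Field k] {n r : ℕ} {a : Fin n → Fin r → ℤ}
  {M : Type} [AddCommGroup M] [Module k M] [Module (MvPolynomial (Fin n) k) M]
  [IsScalarTower k (MvPolynomial (Fin n) k) M]

/-!
Replacing `v` by `d • v` multiplies every coarse degree by `d`, so `M^[dv]` in degree `d q` is
`M^[v]` in degree `q`, and the same holds for homogeneous Čech cochains and their cohomology.
When `n > 0` also `c_{dv} = d c_v`, so the degrees tested by `d p ∈ reg_{dv}(M)` are exactly `d`
times those tested by `p ∈ reg_v(M)`. When `n = 0` one has `c_v = c_{dv} = 1`, only `H^0` can be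
nonzero, and its degrees `p + 1 + ℕ` are again among those tested for `d p`.
-/

theorem Finset.lcm_mul_left {α ι : Type*} [CommMonoidWithZero α] [StrongNormalizedGCDMonoid α]
    {s : Finset ι} (hs : s.Nonempty) {f : ι → α} {c : α} :
    (s.lcm fun i ↦ c * f i) = normalize c * s.lcm f := by
  classical
  induction hs using Finset.Nonempty.cons_induction with
  | singleton i => simp
  | cons i s hi hs ih =>
    rw [Finset.cons_eq_insert, Finset.lcm_insert, Finset.lcm_insert, ih,
      ← _root_.lcm_mul_left c (f i) (s.lcm f)]
    exact lcm_eq_of_associated_right ((normalize_associated c).mul_right _) _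

theorem vdot_smul {r : ℕ} (u v : Fin r → ℤ) (c : ℤ) : vdot u (c • v) = c * vdot u v :=
  dotProduct_smul c u v

theorem cVal_smul (hn : n ≠ 0) (v : Fin r → ℤ) {c : ℤ} (hc : 0 ≤ c) :
    cVal a (c • v) = c * cVal a v := by
  have : Nonempty (Fin n) := ⟨⟨0, Nat.pos_of_ne_zero hn⟩⟩
  simp only [cVal, vdot_smul]
  rw [Finset.lcm_mul_left Finset.univ_nonempty, Int.normalize_of_nonneg hc]

theorem coarsePiece_smul (G : GradingData k a M) (v : Fin r → ℤ) {c : ℤ} (hc : c ≠ 0)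
    (m : ℤ) : coarsePiece G (c • v) (c * m) = coarsePiece G v m := by
  simp only [coarsePiece, vdot_smul, Set.mem_ofPred_eq, mul_right_inj' hc]

theorem isHomCochain_smul_iff (G : GradingData k a M) (v : Fin r → ℤ) {c : ℤ} (hc : c ≠ 0)
    (t p : ℕ) (q : ℤ) (f : Finset (Fin n) → M) :
    IsHomCochain G (c • v) t p (c * q) f ↔ IsHomCochain G v t p q f := by
  have hdeg (J : Finset (Fin n)) : c * q + t * ∑ j ∈ J, vdot (a j) (c • v)
      = c * (q + t * ∑ j ∈ J, vdot (a j) v) := by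
    simp only [vdot_smul, ← Finset.mul_sum]
    ring
  simp only [IsHomCochain, hdeg, coarsePiece_smul G v hc]

theorem localCohVanish_smul_iff (G : GradingData k a M) (v : Fin r → ℤ) {c : ℤ} (hc : c ≠ 0)
    (i : ℕ) (q : ℤ) : LocalCohVanish G (c • v) i (c * q) ↔ LocalCohVanish G v i q := by
  simp only [LocalCohVanish, isHomCochain_smul_iff G v hc]

theorem localCohVanish_of_lt (G : GradingData k a M) (v : Fin r → ℤ) {i : ℕ} (hi : n < i)
    (q : ℤ) : LocalCohVanish G v i q := by
  intro t f _ _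
  refine ⟨t, le_rfl, 0, fun J _ ↦ zero_mem _, fun J hJ ↦ ?_⟩
  have := J.card_le_univ
  simp only [Fintype.card_fin] at this
  omega

theorem mul_mem_regSet_smul_iff (G : GradingData k a M) (v : Fin r → ℤ) (hn : n ≠ 0) {c : ℤ}
    (hc : 0 < c) {p : ℤ} : c * p ∈ regSet G (c • v) ↔ p ∈ regSet G v := by
  have hdeg (i dd : ℕ) : c * p + cVal a (c • v) * (1 - i + dd)
      = c * (p + cVal a v * (1 - i + dd)) := by
    rw [cVal_smul hn v hc.le]
    ring
  simp only [regSet, Set.mem_ofPred_eq, hdeg, localCohVanish_smul_iff G v hc.ne']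

theorem mem_regSet_of_mul_mem_regSet_smul (G : GradingData k a M) (v : Fin r → ℤ) {d : ℕ}
    (hd : 0 < d) {p : ℤ} (h : (d : ℤ) * p ∈ regSet G ((d : ℤ) • v)) : p ∈ regSet G v := by
  rcases Nat.eq_zero_or_pos n with rfl | hn
  · have hc (w : Fin r → ℤ) : cVal a w = 1 := by simp [cVal]
    intro i dd
    rcases Nat.eq_zero_or_pos i with rfl | hi
    · -- `c_v = c_{dv} = 1`: the degree `d (p + 1 + dd)` is `d p + 1 + dd'`, `dd' = d (1 + dd) - 1`
      have hdd : ((d * (1 + dd) - 1 : ℕ) : ℤ) = d * (1 + dd) - 1 := by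
        have : 1 ≤ d * (1 + dd) := Nat.one_le_iff_ne_zero.mpr (by positivity)
        push_cast [this]
        ring
      have hdeg : (d : ℤ) * p + cVal a ((d : ℤ) • v) * (1 - (0 : ℕ) + ((d * (1 + dd) - 1 : ℕ) : ℤ))
          = d * (p + cVal a v * (1 - (0 : ℕ) + dd)) := by
        rw [hc, hc, hdd]
        push_cast
        ring
      have hvan := h 0 (d * (1 + dd) - 1)
      rw [hdeg] at hvan
      exact (localCohVanish_smul_iff G v (by positivity) 0 _).mp hvan
    · exact localCohVanish_of_lt G v hi _
  · exact (mul_mem_regSet_smul_iff G v hn.ne' (by positivity)).mp h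

theorem scalar_regNum_not_mem_general
    {k : Type} [Field k] {n r : ℕ} {a : Fin n → Fin r → ℤ}
    {M : Type} [AddCommGroup M] [Module k M] [Module (MvPolynomial (Fin n) k) M]
    [IsScalarTower k (MvPolynomial (Fin n) k) M]
    (G : GradingData k a M) (v : Fin r → ℤ)
    (d : ℕ) (hd : 0 < d)
    (hr : regNum G v - 1 ∉ regSet G v) :
    (d : ℤ) * (regNum G v - 1) ∉ regSet G ((d : ℤ) • v) :=
  fun h ↦ hr (mem_regSet_of_mul_mem_regSet_smul G v hd h)

/-- With `r = reg-num_v(M)` (so that `r - 1 ∉ reg_v(M)`), for every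
`d > 0` one has `d(r-1) ∉ reg_{d·v}(M)`: otherwise the vanishing
`H^i_𝔪(M^[d·v])_q = 0` for all `q ∈ d(r-1) + ℕ(d c_v)[1-i]` would force
`H^i_𝔪(M^[v])_{q'} = 0` for all `q' ∈ (r-1) + ℕ c_v[1-i]`, contradicting
`r - 1 ∉ reg_v(M)`. -/
theorem scalar_regNum_not_mem
    {k : Type} [Field k] {n r : ℕ} {a : Fin n → Fin r → ℤ}
    (hpos : PositivelyMultigraded a)
    {M : Type} [AddCommGroup M] [Module k M] [Module (MvPolynomial (Fin n) k) M]
    [IsScalarTower k (MvPolynomial (Fin n) k) M]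
    [Module.Finite (MvPolynomial (Fin n) k) M]
    (G : GradingData k a M) (v : Fin r → ℤ) (hv : IsPosCoarsening a v)
    (d : ℕ) (hd : 0 < d)
    (hr : regNum G v - 1 ∉ regSet G v) :
    (d : ℤ) * (regNum G v - 1) ∉ regSet G ((d : ℤ) • v) :=
  scalar_regNum_not_mem_general G v d hd hr
end
end
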